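/- arXiv:math/9711208 — 6 statements merged into one kernel-verified Lean document; each statement's English description precedes it below -/
import Mathlib

section
/- Let X be a locally compact Hausdorff space, let τ : X → Iso(B(H)) be any function and let φ : X → X be a bijection. If the linear map Φ defined by Φ(f)(x) = [τ(x)](f(φ(x))) (f ∈ C₀(X, B(H)), x ∈ X) maps C₀(X, B(H)) into C₀(X, B(H)), then Φ is a surjective linear isometry of C₀(X, B(H)) onto itself. -/
/-!
Linearity and the isometry property hold pointwise, since `‖Φ f x‖ = ‖f (φ x)‖` and `φ` is onto.
The same identity makes `x ↦ ‖k (φ x)‖` a `C₀` function for every `k`; testing this on bump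
functions shows that `φ` is continuous and proper, hence a homeomorphism. Surjectivity then needs
no density argument: for `g` in `C₀`, the function `x ↦ τ(x)⁻¹ (g x)` is continuous and vanishes
at infinity, and precomposing it with `φ⁻¹` gives the preimage of `g`.
-/

open scoped ZeroAtInfty

def IsSurjectiveLinearIsometry {A : Type*} [SeminormedAddCommGroup A] [Module ℂ A]
    (Φ : A → A) : Prop :=
  IsLinearMap ℂ Φ ∧ Function.Surjective Φ ∧ ∀ a : A, ‖Φ a‖ = ‖a‖

open Filter Topology Function Set

namespace ZeroAtInftyContinuousMap

variable {X Y E F : Type*} [TopologicalSpace X] [TopologicalSpace Y]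
  [NormedAddCommGroup E] [NormedAddCommGroup F]

theorem norm_eq_of_norm_apply_eq_comp {φ : X → Y} (hφ : Surjective φ) {f : C₀(Y, E)}
    {g : C₀(X, F)} (h : ∀ x, ‖g x‖ = ‖f (φ x)‖) : ‖g‖ = ‖f‖ := by
  simp only [← norm_toBCF_eq_norm, BoundedContinuousFunction.norm_eq_iSup_norm, toBCF_apply, h]
  exact hφ.iSup_comp fun y => ‖f y‖

section LocallyCompact

variable [LocallyCompactSpace Y] [T2Space Y] [NormedSpace ℝ E]

theorem exists_eqOn_const_of_isCompact {K U : Set Y} (hK : IsCompact K) (hU : IsOpen U)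
    (hKU : K ⊆ U) (a : E) : ∃ k : C₀(Y, E), EqOn k (fun _ => a) K ∧ EqOn k 0 Uᶜ := by
  obtain ⟨h, h1, h0, hcs, -⟩ := exists_continuous_one_zero_of_isCompact hK hU.isClosed_compl
    (disjoint_compl_right_iff_subset.2 hKU)
  refine ⟨⟨⟨fun y => h y • a, by fun_prop⟩, (hcs.smul_right).is_zero_at_infty⟩,
    fun y hy => ?_, fun y hy => ?_⟩
  · simp [h1 hy]
  · simp [h0 hy]

section Nontrivial

variable [Nontrivial E] {φ : X → Y}

theorem continuous_of_forall_continuous_norm_comp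
    (h : ∀ k : C₀(Y, E), Continuous fun x => ‖k (φ x)‖) : Continuous φ := by
  refine continuous_iff_continuousAt.2 fun x₀ => (nhds_basis_opens _).tendsto_right_iff.2 ?_
  rintro U ⟨hx₀U, hU⟩
  obtain ⟨a, ha⟩ := exists_ne (0 : E)
  obtain ⟨k, hka, hk0⟩ := exists_eqOn_const_of_isCompact (isCompact_singleton (x := φ x₀)) hU
    (singleton_subset_iff.2 hx₀U) a
  have hne : ‖k (φ x₀)‖ ≠ 0 := by simpa [hka rfl] using ha
  filter_upwards [(h k).continuousAt.eventually_ne hne] with x hx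
  by_contra hxU
  simp [hk0 hxU] at hx

theorem tendsto_cocompact_of_forall_tendsto_norm_comp
    (h : ∀ k : C₀(Y, E), Tendsto (fun x => ‖k (φ x)‖) (cocompact X) (𝓝 0)) :
    Tendsto φ (cocompact X) (cocompact Y) := by
  refine hasBasis_cocompact.tendsto_right_iff.2 fun K hK => ?_
  obtain ⟨a, ha⟩ := exists_ne (0 : E)
  obtain ⟨k, hka, -⟩ := exists_eqOn_const_of_isCompact hK isOpen_univ (subset_univ K) a
  filter_upwards [(h k).eventually (gt_mem_nhds (norm_pos_iff.2 ha))] with x hx hxK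
  simp [hka hxK] at hx

theorem isHomeomorph_of_norm_apply_eq_comp (hφ : Bijective φ) (Φ : C₀(Y, E) → C₀(X, F))
    (hΦ : ∀ k x, ‖Φ k x‖ = ‖k (φ x)‖) : IsHomeomorph φ := by
  have hcont : Continuous φ := continuous_of_forall_continuous_norm_comp (E := E) fun k => by
    simpa only [hΦ] using (map_continuous (Φ k)).norm
  have htend : Tendsto φ (cocompact X) (cocompact Y) :=
    tendsto_cocompact_of_forall_tendsto_norm_comp (E := E) fun k => by
      simpa only [hΦ, norm_zero] using (zero_at_infty (Φ k)).norm
  exact isHomeomorph_iff_continuous_isClosedMap_bijective.2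
    ⟨hcont, (isProperMap_iff_tendsto_cocompact.2 ⟨hcont, htend⟩).isClosedMap, hφ⟩

end Nontrivial

variable {𝕜 : Type*} [NontriviallyNormedField 𝕜] [NormedSpace 𝕜 E] [NormedSpace 𝕜 F]

-- Near `x₀`, compare with a `k` taking the value `f x₀` at `φ x₀`:
-- `‖f x - k (φ x)‖ = ‖g x - Φ k x‖`, which is continuous and vanishes at `x₀`.
theorem continuous_symm_apply_of_apply_eq {φ : X → Y} (hφ : Continuous φ)
    (T : X → E ≃ₗᵢ[𝕜] F) (Φ : C₀(Y, E) → C₀(X, F)) (hΦ : ∀ f x, Φ f x = T x (f (φ x)))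
    (g : C₀(X, F)) : Continuous fun x => (T x).symm (g x) := by
  set f : X → E := fun x => (T x).symm (g x) with hf
  refine continuous_iff_continuousAt.2 fun x₀ => ?_
  obtain ⟨k, hk, -⟩ := exists_eqOn_const_of_isCompact (isCompact_singleton (x := φ x₀))
    isOpen_univ (subset_univ _) (f x₀)
  have hdist : ∀ x, ‖f x - k (φ x)‖ = ‖g x - Φ k x‖ := fun x => by
    rw [← (T x).norm_map, map_sub, hΦ, LinearIsometryEquiv.apply_symm_apply]
  have hsmall : Tendsto (fun x => f x - k (φ x)) (𝓝 x₀) (𝓝 0) := by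
    rw [tendsto_zero_iff_norm_tendsto_zero]
    simp only [hdist]
    simpa [hΦ, hk rfl, hf] using ((map_continuous g).sub (map_continuous (Φ k))).norm.tendsto x₀
  have := hsmall.add ((map_continuous k).comp hφ).continuousAt
  simpa [ContinuousAt, hk rfl] using this

theorem surjective_of_apply_eq_linearIsometryEquiv_apply (T : X → E ≃ₗᵢ[𝕜] F) (φ : X ≃ₜ Y)
    (Φ : C₀(Y, E) → C₀(X, F)) (hΦ : ∀ f x, Φ f x = T x (f (φ x))) : Surjective Φ := by
  intro g
  have hzero : Tendsto (fun x => (T x).symm (g x)) (cocompact X) (𝓝 0) := by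
    simpa [tendsto_zero_iff_norm_tendsto_zero] using zero_at_infty g
  let f : C₀(X, E) := ⟨⟨_, continuous_symm_apply_of_apply_eq φ.continuous T Φ hΦ g⟩, hzero⟩
  refine ⟨f.comp φ.symm.toCocompactMap, ext fun x => ?_⟩
  simp [hΦ, f]

end LocallyCompact

end ZeroAtInftyContinuousMap

theorem form_is_surjective_isometry_of_C0_BH_general
    {H : Type*} [NormedAddCommGroup H] [InnerProductSpace ℂ H]
    {X : Type*} [TopologicalSpace X] [LocallyCompactSpace X] [T2Space X]
    (τ : X → (H →L[ℂ] H) → (H →L[ℂ] H)) (hτ : ∀ x : X, IsSurjectiveLinearIsometry (τ x))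
    (φ : X → X) (hφ : Function.Bijective φ)
    (Φ : C₀(X, H →L[ℂ] H) → C₀(X, H →L[ℂ] H))
    (hΦ : ∀ (f : C₀(X, H →L[ℂ] H)) (x : X), Φ f x = τ x (f (φ x))) :
    IsSurjectiveLinearIsometry Φ := by
  have hnorm : ∀ f x, ‖Φ f x‖ = ‖f (φ x)‖ := fun f x => by rw [hΦ, (hτ x).2.2]
  refine ⟨⟨fun f g => ZeroAtInftyContinuousMap.ext fun x => ?_,
      fun c f => ZeroAtInftyContinuousMap.ext fun x => ?_⟩, ?_,
    fun f => ZeroAtInftyContinuousMap.norm_eq_of_norm_apply_eq_comp hφ.surjective (hnorm f)⟩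
  · simp only [hΦ, ZeroAtInftyContinuousMap.coe_add, Pi.add_apply, (hτ x).1.map_add]
  · simp only [hΦ, ZeroAtInftyContinuousMap.coe_smul, Pi.smul_apply, (hτ x).1.map_smul]
  rcases subsingleton_or_nontrivial H with hH | hH
  · exact fun g => ⟨0, ZeroAtInftyContinuousMap.ext fun x => Subsingleton.elim _ _⟩
  let T : X → (H →L[ℂ] H) ≃ₗᵢ[ℂ] (H →L[ℂ] H) := fun x =>
    .ofSurjective ⟨(hτ x).1.mk' _, (hτ x).2.2⟩ (hτ x).2.1
  have hφ' : IsHomeomorph φ :=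
    ZeroAtInftyContinuousMap.isHomeomorph_of_norm_apply_eq_comp hφ Φ hnorm
  exact ZeroAtInftyContinuousMap.surjective_of_apply_eq_linearIsometryEquiv_apply T
    (hφ'.homeomorph φ) Φ hΦ

/-- If `τ : X → Iso(B(H))`, `φ : X → X` is a bijection, and the map
`f ↦ (x ↦ τ(x)(f(φ(x))))` maps `C₀(X, B(H))` into itself (encoded by the existence of
`Φ` on `C₀(X, B(H))` given pointwise by this formula), then `Φ` is a surjective linear
isometry of `C₀(X, B(H))`. -/
theorem form_is_surjective_isometry_of_C0_BH
    {H : Type*} [NormedAddCommGroup H] [InnerProductSpace ℂ H] [CompleteSpace H]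
    [TopologicalSpace.SeparableSpace H] (hH : ¬ FiniteDimensional ℂ H)
    {X : Type*} [TopologicalSpace X] [LocallyCompactSpace X] [T2Space X]
    (τ : X → (H →L[ℂ] H) → (H →L[ℂ] H)) (hτ : ∀ x : X, IsSurjectiveLinearIsometry (τ x))
    (φ : X → X) (hφ : Function.Bijective φ)
    (Φ : C₀(X, H →L[ℂ] H) → C₀(X, H →L[ℂ] H))
    (hΦ : ∀ (f : C₀(X, H →L[ℂ] H)) (x : X), Φ f x = τ x (f (φ x))) :
    IsSurjectiveLinearIsometry Φ :=
  form_is_surjective_isometry_of_C0_BH_general τ hτ φ hφ Φ hΦ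
end

section
/- Let τ, τ₁, τ₂ be automorphisms of B(H), let λ ∈ ℂ, and let λ₁, λ₂ ∈ ℂ be nonzero scalars such that λ·τ(A) = λ₁·τ₁(A) + λ₂·τ₂(A) for every A ∈ B(H). Then τ₁ = τ₂. -/
/-!
Write `D A = τ₁ A - τ₂ A`. Evaluating the relation at `1` gives `λ τ(1) = λ₁ + λ₂`, and comparing
`(λ τ A)(λ τ B) = λ τ(1) · λ τ(AB)` with the relation shows `λ₁ λ₂ D(A) D(B) = 0`, so `D(A) D(B) = 0`.
Since `D(AC) = D(A) τ₁(C) + τ₂(A) D(C)`, this forces `D(A) τ₁(C) D(A) = 0` for all `C`; as `τ₁` is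
onto, `D(A) W D(A) = 0` for every operator `W`, and `B(H)` is semiprime, so `D(A) = 0`.
-/

open scoped ZeroAtInfty

/-- An automorphism of a (not necessarily unital) algebra: a multiplicative linear bijection. -/
def IsAlgebraAutomorphism {A : Type*} [NonUnitalNonAssocSemiring A] [Module ℂ A]
    (Φ : A → A) : Prop :=
  IsLinearMap ℂ Φ ∧ (∀ a b : A, Φ (a * b) = Φ a * Φ b) ∧ Function.Bijective Φ

def IsSemiprimeRing (R : Type*) [Mul R] [Zero R] : Prop :=
  ∀ a : R, (∀ w : R, a * w * a = 0) → a = 0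

theorem ContinuousLinearMap.isSemiprimeRing {𝕜 E : Type*} [RCLike 𝕜] [NormedAddCommGroup E]
    [NormedSpace 𝕜 E] : IsSemiprimeRing (E →L[𝕜] E) := by
  intro a ha
  by_contra hne
  obtain ⟨u, hu⟩ : ∃ u, a u ≠ 0 := by
    by_contra! h
    exact hne (ext h)
  obtain ⟨g, -, hg⟩ := exists_dual_vector 𝕜 (a u) (norm_ne_zero_iff.mpr hu)
  have hgu : g (a u) ≠ 0 := by simpa [hg] using hu
  -- `a (g.smulRight u) a u = g (a u) • a u`
  have := congrArg (· u) (ha (g.smulRight u))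
  simp only [mul_apply_eq_comp, smulRight_apply, map_smul, zero_apply] at this
  exact hgu ((smul_eq_zero.mp this).resolve_right hu)

noncomputable def IsAlgebraAutomorphism.toMulEquiv {A : Type*} [NonUnitalNonAssocSemiring A]
    [Module ℂ A] {Φ : A → A} (hΦ : IsAlgebraAutomorphism Φ) : A ≃* A :=
  MulEquiv.ofBijective (MulHom.mk Φ hΦ.2.1) hΦ.2.2

theorem sub_mul_sub_eq_zero_of_smul_eq_add_smul {𝕜 R : Type*} [Field 𝕜] [Ring R] [Algebra 𝕜 R]
    (τ : R →ₙ* R) (τ₁ τ₂ : R →* R)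
    {lam lam₁ lam₂ : 𝕜} (h₁ : lam₁ ≠ 0) (h₂ : lam₂ ≠ 0)
    (h : ∀ A, lam • τ A = lam₁ • τ₁ A + lam₂ • τ₂ A) (A B : R) :
    (τ₁ A - τ₂ A) * (τ₁ B - τ₂ B) = 0 := by
  have hone : lam • τ 1 = (lam₁ + lam₂) • (1 : R) := by simp [h, add_smul]
  have hsq : lam • τ A * lam • τ B = lam • τ 1 * lam • τ (A * B) := by
    simp only [smul_mul_smul, ← map_mul, one_mul]
  rw [hone, h, h, h, map_mul, map_mul] at hsq
  simp only [add_mul, mul_add, smul_mul_assoc, mul_smul_comm, smul_smul, one_mul] at hsq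
  have : (lam₁ * lam₂) • ((τ₁ A - τ₂ A) * (τ₁ B - τ₂ B)) = 0 := by
    simp only [sub_mul, mul_sub, smul_sub]
    linear_combination (norm := module) -hsq
  exact (smul_eq_zero.mp this).resolve_left (mul_ne_zero h₁ h₂)

theorem MulHom.eq_of_sub_mul_sub_eq_zero {R : Type*} [Ring R] (hR : IsSemiprimeRing R)
    {f g : R →ₙ* R} (hf : Function.Surjective f)
    (hfg : ∀ A B, (f A - g A) * (f B - g B) = 0) : f = g := by
  ext A
  refine sub_eq_zero.mp (hR _ fun W ↦ ?_)
  obtain ⟨C, rfl⟩ := hf W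
  calc (f A - g A) * f C * (f A - g A)
      = (f (A * C) - g (A * C)) * (f A - g A) - g A * ((f C - g C) * (f A - g A)) := by
        simp only [map_mul]; noncomm_ring
    _ = 0 := by rw [hfg, hfg, mul_zero, sub_zero]

theorem aut_eq_of_linear_combination_general
    {H : Type*} [NormedAddCommGroup H] [InnerProductSpace ℂ H]
    (τ τ₁ τ₂ : (H →L[ℂ] H) → (H →L[ℂ] H))
    (hτ : IsAlgebraAutomorphism τ) (hτ₁ : IsAlgebraAutomorphism τ₁)
    (hτ₂ : IsAlgebraAutomorphism τ₂)
    (lam lam₁ lam₂ : ℂ) (h₁ : lam₁ ≠ 0) (h₂ : lam₂ ≠ 0)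
    (h : ∀ A : H →L[ℂ] H, lam • τ A = lam₁ • τ₁ A + lam₂ • τ₂ A) :
    τ₁ = τ₂ := by
  have hD := sub_mul_sub_eq_zero_of_smul_eq_add_smul hτ.toMulEquiv.toMulHom
    hτ₁.toMulEquiv.toMonoidHom hτ₂.toMulEquiv.toMonoidHom h₁ h₂ h
  exact congrArg DFunLike.coe (MulHom.eq_of_sub_mul_sub_eq_zero ContinuousLinearMap.isSemiprimeRing
    (f := hτ₁.toMulEquiv.toMulHom) (g := hτ₂.toMulEquiv.toMulHom) hτ₁.2.2.2 hD)

/-- If `τ, τ₁, τ₂` are automorphisms of `B(H)`, `λ ∈ ℂ`, and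
`λ₁, λ₂ ∈ ℂ` are nonzero scalars with `λ·τ(A) = λ₁·τ₁(A) + λ₂·τ₂(A)` for all
`A ∈ B(H)`, then `τ₁ = τ₂`. -/
theorem aut_eq_of_linear_combination
    {H : Type*} [NormedAddCommGroup H] [InnerProductSpace ℂ H] [CompleteSpace H]
    [TopologicalSpace.SeparableSpace H] (hH : ¬ FiniteDimensional ℂ H)
    (τ τ₁ τ₂ : (H →L[ℂ] H) → (H →L[ℂ] H))
    (hτ : IsAlgebraAutomorphism τ) (hτ₁ : IsAlgebraAutomorphism τ₁)
    (hτ₂ : IsAlgebraAutomorphism τ₂)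
    (lam lam₁ lam₂ : ℂ) (h₁ : lam₁ ≠ 0) (h₂ : lam₂ ≠ 0)
    (h : ∀ A : H →L[ℂ] H, lam • τ A = lam₁ • τ₁ A + lam₂ • τ₂ A) :
    τ₁ = τ₂ :=
  aut_eq_of_linear_combination_general τ τ₁ τ₂ hτ hτ₁ hτ₂ lam lam₁ lam₂ h₁ h₂ h
end

section
/- If M is a linear subspace of B(H) all of whose elements are scalar multiples of unitary operators (i.e., M ⊆ ℂ·U(H), where U(H) denotes the set of unitary operators on H), then M is either 1-dimensional or 0-dimensional. -/
/-!
If `x = c • u` with `u` unitary then `star x * x = x * star x = (conj c * c) • 1`. In a subspace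
`M` of such elements, polarization upgrades this to `star t * s ∈ ℂ ∙ 1` for all `t s ∈ M`, say
`star t * s = μ • 1`. Multiplying on the left by `t` gives `(conj c * c) • s = μ • t`, so for
`t = c • u ≠ 0` every `s ∈ M` is a multiple of `t`.
-/

open ComplexConjugate

section StarAlgebra

variable {A : Type*} [Ring A] [StarRing A] [Algebra ℂ A]

lemma mem_span_singleton_of_star_mul_mem_span_one {t s : A} {r : ℂ} (hr : r ≠ 0)
    (ht : t * star t = r • (1 : A)) (hts : star t * s ∈ ℂ ∙ (1 : A)) : s ∈ ℂ ∙ t := by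
  obtain ⟨μ, hμ⟩ := Submodule.mem_span_singleton.mp hts
  have key : r • s = μ • t := by
    calc r • s = t * star t * s := by rw [ht, smul_mul_assoc, one_mul]
      _ = μ • t := by rw [mul_assoc, ← hμ, mul_smul_comm, mul_one]
  refine Submodule.mem_span_singleton.mpr ⟨r⁻¹ * μ, ?_⟩
  rw [mul_smul, ← key, smul_smul, inv_mul_cancel₀ hr, one_smul]

variable [StarModule ℂ A]

lemma star_smul_mul_smul_of_mem_unitary (c : ℂ) {u : A} (hu : u ∈ unitary A) :
    star (c • u) * (c • u) = (conj c * c) • (1 : A) := by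
  rw [star_smul, smul_mul_smul_comm, Unitary.star_mul_self_of_mem hu]
  rfl

lemma smul_mul_star_smul_of_mem_unitary (c : ℂ) {u : A} (hu : u ∈ unitary A) :
    (c • u) * star (c • u) = (conj c * c) • (1 : A) := by
  rw [star_smul, smul_mul_smul_comm, Unitary.mul_star_self_of_mem hu, mul_comm]
  rfl

lemma star_mul_mem_span_one_of_forall_star_mul_self_mem {M : Submodule ℂ A}
    (hM : ∀ x ∈ M, star x * x ∈ ℂ ∙ (1 : A)) {x y : A} (hx : x ∈ M) (hy : y ∈ M) :
    star x * y ∈ ℂ ∙ (1 : A) := by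
  set q : A → A := fun z ↦ star z * z
  have polarization : star x * y = (1 / 2 : ℂ) • (q (x + y) - q x - q y)
      + (-Complex.I / 2) • (q (x + Complex.I • y) - q x - q y) := by
    simp only [q, star_add, star_smul, add_mul, mul_add, smul_mul_assoc, mul_smul_comm,
      Complex.star_def, Complex.conj_I]
    match_scalars <;> ring_nf <;> norm_num [Complex.I_sq]
  have hq : ∀ z ∈ M, q z ∈ ℂ ∙ (1 : A) := hM
  rw [polarization]
  refine add_mem (Submodule.smul_mem _ _ (sub_mem (sub_mem ?_ ?_) ?_))
    (Submodule.smul_mem _ _ (sub_mem (sub_mem ?_ ?_) ?_)) <;>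
    apply_rules [hq, Submodule.add_mem, Submodule.smul_mem]

theorem rank_le_one_of_forall_mem_eq_smul_unitary {M : Submodule ℂ A}
    (hM : ∀ x ∈ M, ∃ (c : ℂ) (u : A), u ∈ unitary A ∧ x = c • u) : Module.rank ℂ M ≤ 1 := by
  rw [rank_submodule_le_one_iff]
  rcases eq_or_ne M ⊥ with rfl | hne
  · exact ⟨0, zero_mem _, bot_le⟩
  · obtain ⟨t, htM, ht0⟩ := Submodule.exists_mem_ne_zero_of_ne_bot hne
    obtain ⟨c, u, hu, rfl⟩ := hM t htM
    have hc : c ≠ 0 := by rintro rfl; exact ht0 (zero_smul ℂ u)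
    have hscalar : ∀ x ∈ M, star x * x ∈ ℂ ∙ (1 : A) := by
      intro x hx
      obtain ⟨d, v, hv, rfl⟩ := hM x hx
      exact Submodule.mem_span_singleton.mpr ⟨_, (star_smul_mul_smul_of_mem_unitary d hv).symm⟩
    refine ⟨c • u, htM, fun s hs ↦ ?_⟩
    exact mem_span_singleton_of_star_mul_mem_span_one (by simpa using hc)
      (smul_mul_star_smul_of_mem_unitary c hu)
      (star_mul_mem_span_one_of_forall_star_mul_self_mem hscalar htM hs)

end StarAlgebra

theorem submodule_of_scalar_multiples_of_unitaries_rank_le_one_general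
    {H : Type*} [NormedAddCommGroup H] [InnerProductSpace ℂ H] [CompleteSpace H]
    (M : Submodule ℂ (H →L[ℂ] H))
    (hM : ∀ T ∈ M, ∃ (c : ℂ) (U : H →L[ℂ] H), U ∈ unitary (H →L[ℂ] H) ∧ T = c • U) :
    Module.rank ℂ M ≤ 1 :=
  rank_le_one_of_forall_mem_eq_smul_unitary hM

/-- A linear subspace of `B(H)` consisting of scalar multiples of
unitary operators is at most one-dimensional. -/
theorem submodule_of_scalar_multiples_of_unitaries_rank_le_one
    {H : Type*} [NormedAddCommGroup H] [InnerProductSpace ℂ H] [CompleteSpace H]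
    [TopologicalSpace.SeparableSpace H] (hH : ¬ FiniteDimensional ℂ H)
    (M : Submodule ℂ (H →L[ℂ] H))
    (hM : ∀ T ∈ M, ∃ (c : ℂ) (U : H →L[ℂ] H), U ∈ unitary (H →L[ℂ] H) ∧ T = c • U) :
    Module.rank ℂ M ≤ 1 :=
  submodule_of_scalar_multiples_of_unitaries_rank_le_one_general M hM
end

section
/- Let X be a locally compact Hausdorff space and let M ⊆ ℂ^X be a linear subspace of complex-valued functions on X containing a nowhere vanishing function f₀ ∈ M and having the property that |f| ∈ C₀(X) for every f ∈ M (i.e., the pointwise absolute value of every member of M is continuous and vanishes at infinity). Then there exists a function t : X → ℂ with |t(x)| = 1 for all x ∈ X such that t·f ∈ C₀(X) for every f ∈ M. -/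
/-!
Take `t = conj f₀ / |f₀|`. Then `|t f| = |f|` vanishes at infinity, and
`t f = ⟪f₀, f⟫ / |f₀|` is continuous because, by polarization, the pointwise inner product
`⟪f₀, f⟫` is a combination of the moduli `|f₀ ± f|`, `|f₀ ± i f|` of members of `M`.
-/

open scoped ZeroAtInfty InnerProductSpace ComplexConjugate

theorem RCLike.norm_conj_div_norm {𝕜 : Type*} [RCLike 𝕜] {z : 𝕜} (hz : z ≠ 0) :
    ‖conj z / (‖z‖ : 𝕜)‖ = 1 := by
  rw [norm_div, RCLike.norm_conj, RCLike.norm_ofReal, abs_norm,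
    div_self (norm_ne_zero_iff.mpr hz)]

theorem Submodule.continuous_inner_of_continuous_norm {𝕜 E X : Type*} [RCLike 𝕜]
    [SeminormedAddCommGroup E] [InnerProductSpace 𝕜 E] [TopologicalSpace X]
    (M : Submodule 𝕜 (X → E)) (hM : ∀ f ∈ M, Continuous fun x => ‖f x‖)
    {f g : X → E} (hf : f ∈ M) (hg : g ∈ M) : Continuous fun x => ⟪f x, g x⟫_𝕜 := by
  have hIg : RCLike.I • g ∈ M := M.smul_mem _ hg
  have h₁ := hM _ (M.add_mem hf hg)
  have h₂ := hM _ (M.sub_mem hf hg)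
  have h₃ := hM _ (M.sub_mem hf hIg)
  have h₄ := hM _ (M.add_mem hf hIg)
  simp only [Pi.add_apply, Pi.sub_apply, Pi.smul_apply] at h₁ h₂ h₃ h₄
  simp only [inner_eq_sum_norm_sq_div_four]
  fun_prop

theorem ZeroAtInftyContinuousMap.exists_eq_of_norm_eq {X E : Type*} [TopologicalSpace X]
    [SeminormedAddCommGroup E] {F : X → E} (hF : Continuous F) (g : C₀(X, ℝ))
    (hg : ∀ x, g x = ‖F x‖) : ∃ G : C₀(X, E), ∀ x, G x = F x := by
  have hzero : Filter.Tendsto F (Filter.cocompact X) (nhds 0) := by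
    rw [tendsto_zero_iff_norm_tendsto_zero, ← funext hg]
    exact zero_at_infty g
  exact ⟨⟨⟨F, hF⟩, hzero⟩, fun _ => rfl⟩

theorem exists_unimodular_multiplier_general
    {X : Type*} [TopologicalSpace X]
    (M : Submodule ℂ (X → ℂ)) (f₀ : X → ℂ) (hf₀ : f₀ ∈ M) (hf₀' : ∀ x : X, f₀ x ≠ 0)
    (habs : ∀ f ∈ M, ∃ g : C₀(X, ℝ), ∀ x : X, g x = ‖f x‖) :
    ∃ t : X → ℂ, (∀ x : X, ‖t x‖ = 1) ∧
      ∀ f ∈ M, ∃ g : C₀(X, ℂ), ∀ x : X, g x = t x * f x := by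
  have hM : ∀ f ∈ M, Continuous fun x => ‖f x‖ := fun f hf => by
    obtain ⟨g, hg⟩ := habs f hf
    exact funext hg ▸ g.continuous
  set t : X → ℂ := fun x => conj (f₀ x) / ‖f₀ x‖
  have ht : ∀ x, ‖t x‖ = 1 := fun x => RCLike.norm_conj_div_norm (hf₀' x)
  refine ⟨t, ht, fun f hf => ?_⟩
  obtain ⟨g, hg⟩ := habs f hf
  have hinner : (fun x => t x * f x) = fun x => ⟪f₀ x, f x⟫_ℂ / ‖f₀ x‖ := by
    ext x
    rw [RCLike.inner_apply]
    ring
  refine ZeroAtInftyContinuousMap.exists_eq_of_norm_eq ?_ g fun x => ?_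
  · rw [hinner]
    exact (M.continuous_inner_of_continuous_norm hM hf₀ hf).div
      (Complex.continuous_ofReal.comp (hM f₀ hf₀)) (by simpa using hf₀')
  · rw [hg, norm_mul, ht, one_mul]

/-- Let `M` be a linear subspace of the complex-valued functions on a
locally compact Hausdorff space `X` containing a nowhere vanishing function and such
that `|f| ∈ C₀(X)` for every `f ∈ M`. Then there is a function `t : X → ℂ` of modulus
one with `t·f ∈ C₀(X)` for every `f ∈ M`. -/
theorem exists_unimodular_multiplier
    {X : Type*} [TopologicalSpace X] [LocallyCompactSpace X] [T2Space X]
    (M : Submodule ℂ (X → ℂ)) (f₀ : X → ℂ) (hf₀ : f₀ ∈ M) (hf₀' : ∀ x : X, f₀ x ≠ 0)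
    (habs : ∀ f ∈ M, ∃ g : C₀(X, ℝ), ∀ x : X, g x = ‖f x‖) :
    ∃ t : X → ℂ, (∀ x : X, ‖t x‖ = 1) ∧
      ∀ f ∈ M, ∃ g : C₀(X, ℂ), ∀ x : X, g x = t x * f x :=
  exists_unimodular_multiplier_general M f₀ hf₀ hf₀' habs
end

section
/- Let X be a first countable locally compact Hausdorff space and let F : C₀(X) → C₀(X) be a local surjective isometry, i.e., a bounded linear map such that for every f ∈ C₀(X) there exists a surjective linear isometry F_f of C₀(X) with F(f) = F_f(f). Then there exist a continuous function t : X → ℂ of modulus one (|t(x)| = 1 for all x) and a map g : X → X which is a homeomorphism of X onto its range (with the subspace topology) such that F(f)(g(x)) = t(x)·f(x) for every f ∈ C₀(X) and every x ∈ X. -/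
/-!
Since points of `X` are compact `Gδ` sets, every `x` carries a peak function `p x ∈ C₀(X)`:
`p x x = 1` and `‖p x z‖ < 1` for `z ≠ x`. If a linear isometry `G` of `C₀(X)` has
`‖G (p x) y‖ = 1`, perturbing `p x` by small multiples of a function vanishing at `x` shows that
`G f y = G (p x) y * f x` for every `f`. For the local surjective isometry `F`, choosing `g x`
where `F (p x)` attains its norm gives the representation, and surjectivity of the isometry that
agrees with `F` at `p x` makes `g x` the only such point. Then `‖F (p x) ∘ g‖ = ‖p x‖` matches
neighbourhoods of `x` with neighbourhoods of `g x`, so `g` is an embedding, and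
`t = F (p x) ∘ g / p x` is continuous near `x`.
-/

open scoped ZeroAtInfty

open Filter Topology Set

def IsSurjectiveLinearIsometry.toLinearIsometry {A : Type*} [SeminormedAddCommGroup A]
    [Module ℂ A] {Φ : A → A} (h : IsSurjectiveLinearIsometry Φ) : A →ₗᵢ[ℂ] A :=
  { h.1.mk' Φ with norm_map' := h.2.2 }

@[simp]
theorem IsSurjectiveLinearIsometry.coe_toLinearIsometry {A : Type*} [SeminormedAddCommGroup A]
    [Module ℂ A] {Φ : A → A} (h : IsSurjectiveLinearIsometry Φ) : ⇑h.toLinearIsometry = Φ :=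
  rfl

theorem continuousAt_of_eq_mul {X G₀ : Type*} [TopologicalSpace X] [GroupWithZero G₀]
    [TopologicalSpace G₀] [T1Space G₀] [ContinuousInv₀ G₀] [ContinuousMul G₀]
    {t u v : X → G₀} {x : X}
    (hu : ContinuousAt u x) (hv : ContinuousAt v x) (hvx : v x ≠ 0)
    (h : ∀ z, u z = t z * v z) : ContinuousAt t x :=
  (hu.div hv hvx).congr <| (hv.eventually_ne hvx).mono fun z hz => by
    rw [Pi.div_apply, h, mul_div_cancel_right₀ _ hz]

def IsStrictPeakAt {X E : Type*} [Norm E] (f : X → E) (x : X) : Prop :=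
  ∀ z, z ≠ x → ‖f z‖ < ‖f x‖

section StrictPeak

variable {X Y E F : Type*} [TopologicalSpace X] [TopologicalSpace Y]
  [NormedAddCommGroup E] [NormedAddCommGroup F]

namespace ZeroAtInftyContinuousMap

theorem norm_apply_le (f : C₀(X, E)) (x : X) : ‖f x‖ ≤ ‖f‖ :=
  f.toBCF.norm_coe_le_norm x

theorem norm_le_of_forall_le (f : C₀(X, E)) {C : ℝ} (hC : 0 ≤ C) (h : ∀ x, ‖f x‖ ≤ C) :
    ‖f‖ ≤ C :=
  (BoundedContinuousFunction.norm_le hC).2 h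

theorem exists_norm_apply_eq_norm (f : C₀(X, E)) (hf : f ≠ 0) : ∃ x, ‖f x‖ = ‖f‖ := by
  obtain ⟨x₀, hx₀⟩ : ∃ x₀, f x₀ ≠ 0 := by
    by_contra! h
    exact hf (ext h)
  have hsmall : ∀ᶠ z in cocompact X, ‖f z‖ ≤ ‖f x₀‖ :=
    (zero_at_infty f).norm.eventually (ge_mem_nhds (by simpa using hx₀))
  obtain ⟨x, hx⟩ := (map_continuous f).norm.exists_forall_ge' x₀ hsmall
  exact ⟨x, (f.norm_apply_le x).antisymm (f.norm_le_of_forall_le (norm_nonneg _) hx)⟩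

end ZeroAtInftyContinuousMap

theorem IsStrictPeakAt.norm_eq {f : C₀(X, E)} {x : X} (hf : IsStrictPeakAt f x) :
    ‖f‖ = ‖f x‖ :=
  (f.norm_le_of_forall_le (norm_nonneg _) fun z => by
    rcases eq_or_ne z x with rfl | hz
    exacts [le_rfl, (hf z hz).le]).antisymm (f.norm_apply_le x)

theorem IsStrictPeakAt.exists_lt_forall_notMem {f : C₀(X, E)} {x : X} (hf : IsStrictPeakAt f x)
    (hx : f x ≠ 0) {U : Set X} (hU : U ∈ 𝓝 x) : ∃ r < ‖f x‖, ∀ z ∉ U, ‖f z‖ ≤ r := by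
  have hsub : Uᶜ ⊆ (interior U)ᶜ := compl_subset_compl.2 interior_subset
  by_cases h : ∃ z₁ ∈ (interior U)ᶜ, f z₁ ≠ 0
  · obtain ⟨z₁, hz₁U, hz₁⟩ := h
    have hsmall : ∀ᶠ z in cocompact X ⊓ 𝓟 (interior U)ᶜ, ‖f z‖ ≤ ‖f z₁‖ :=
      ((zero_at_infty f).norm.eventually (ge_mem_nhds (by simpa using hz₁))).filter_mono
        inf_le_left
    obtain ⟨z₀, hz₀U, hmax⟩ := (map_continuous f).norm.continuousOn.exists_isMaxOn'
      isOpen_interior.isClosed_compl hz₁U hsmall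
    have hz₀x : z₀ ≠ x := by
      rintro rfl
      exact hz₀U (mem_interior_iff_mem_nhds.2 hU)
    exact ⟨‖f z₀‖, hf z₀ hz₀x, fun z hz => hmax (hsub hz)⟩
  · push Not at h
    exact ⟨0, norm_pos_iff.2 hx, fun z hz => by simp [h z (hsub hz)]⟩

theorem IsStrictPeakAt.eventually_mem_of_norm_eq {ψ : C₀(Y, F)} {y : Y}
    (hψ : IsStrictPeakAt ψ y) (hψy : ψ y ≠ 0) {φ : X → E} {x : X} (hφ : ContinuousAt φ x)
    (hxy : ‖φ x‖ = ‖ψ y‖) {V : Set Y} (hV : V ∈ 𝓝 y) :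
    ∀ᶠ z in 𝓝 x, ∀ w, ‖ψ w‖ = ‖φ z‖ → w ∈ V := by
  obtain ⟨r, hr, hoff⟩ := hψ.exists_lt_forall_notMem hψy hV
  filter_upwards [hφ.norm.eventually (lt_mem_nhds (hxy ▸ hr))] with z hz w hw
  by_contra hwV
  exact (hoff w hwV).not_gt (hw ▸ hz)

theorem isInducing_of_isStrictPeakAt {g : X → Y} {φ : X → C₀(X, E)} {ψ : X → C₀(Y, F)}
    (hφ : ∀ x, IsStrictPeakAt (φ x) x) (hψ : ∀ x, IsStrictPeakAt (ψ x) (g x))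
    (hφx : ∀ x, φ x x ≠ 0) (h : ∀ x z, ‖ψ x (g z)‖ = ‖φ x z‖) : IsInducing g := by
  have hψx : ∀ x, ψ x (g x) ≠ 0 := fun x => norm_ne_zero_iff.1 (by simpa [h] using hφx x)
  have hcont : ∀ x, Tendsto g (𝓝 x) (𝓝 (g x)) := fun x V hV =>
    ((hψ x).eventually_mem_of_norm_eq (hψx x) (map_continuous (φ x)).continuousAt
      (h x x).symm hV).mono fun z hz => hz (g z) (h x z)
  refine isInducing_iff_nhds.2 fun x => (hcont x).le_comap.antisymm fun U hU => ?_
  exact mem_comap.2 ⟨{w | ∀ z, ‖φ x z‖ = ‖ψ x w‖ → z ∈ U},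
    (hφ x).eventually_mem_of_norm_eq (hφx x) (map_continuous (ψ x)).continuousAt (h x x) hU,
    fun z hz => hz z (h x z).symm⟩

end StrictPeak

section Peaks

variable {𝕜 X : Type*} [RCLike 𝕜] [TopologicalSpace X]

theorem exists_isStrictPeakAt [LocallyCompactSpace X] [T2Space X] [FirstCountableTopology X]
    (x : X) : ∃ p : C₀(X, 𝕜), p x = 1 ∧ IsStrictPeakAt p x := by
  obtain ⟨f, hfx, -, hfc, hf01⟩ := exists_continuous_one_zero_of_isCompact_of_isGδ
    isCompact_singleton (IsGδ.singleton x) isClosed_empty (disjoint_empty _)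
  have hf1 : ∀ z, f z = 1 ↔ z = x := fun z => by
    simpa using (Set.ext_iff.1 hfx z).symm
  refine ⟨⟨⟨fun z => (f z : 𝕜), by fun_prop⟩,
    (hfc.comp_left (g := ((↑) : ℝ → 𝕜)) RCLike.ofReal_zero).is_zero_at_infty⟩, ?_, ?_⟩
  · simp [(hf1 x).2 rfl]
  · intro z hz
    simp only [ZeroAtInftyContinuousMap.coe_mk, RCLike.norm_ofReal,
      (hf1 x).2 rfl, abs_one, abs_of_nonneg (hf01 z).1]
    exact (hf01 z).2.lt_of_ne fun h => hz ((hf1 z).1 h)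

variable (G : C₀(X, 𝕜) →ₗᵢ[𝕜] C₀(X, 𝕜)) {f₀ : C₀(X, 𝕜)} {x y : X}

/-- The perturbation `h = f₀ + l θ f`, rotated by `θ` so that `G f y` adds in phase to `G f₀ y`,
has norm at most `1 + l ε` while `‖G h y‖ = 1 + l ‖G f y‖`. -/
theorem LinearIsometry.norm_apply_le_of_isStrictPeakAt (hf₀ : IsStrictPeakAt f₀ x)
    (hx : f₀ x = 1) (hy : ‖G f₀ y‖ = 1) {f : C₀(X, 𝕜)} {ε : ℝ}
    (hε : ∀ᶠ z in 𝓝 x, ‖f z‖ ≤ ε) : ‖G f y‖ ≤ ε := by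
  set c := G f y
  set t := G f₀ y
  have hε0 : 0 ≤ ε := (norm_nonneg _).trans hε.self_of_nhds
  obtain ⟨r, hr, hoff⟩ := hf₀.exists_lt_forall_notMem (by simp [hx]) hε
  rw [hx, norm_one] at hr
  set l := (1 - r) / (‖f‖ + 1)
  have hl : 0 < l := div_pos (by linarith) (by positivity)
  have hlf : l * ‖f‖ ≤ 1 - r := by
    rw [div_mul_eq_mul_div, div_le_iff₀ (by positivity)]
    nlinarith [norm_nonneg f]
  set θ : 𝕜 := t * (starRingEnd 𝕜) c / ‖c‖
  have hθ : ‖θ‖ ≤ 1 := by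
    rcases eq_or_ne c 0 with hc | hc
    · simp [θ, hc]
    · simp [θ, hy, hc]
  have hθc : θ * c = ‖c‖ * t := by
    rcases eq_or_ne c 0 with hc | hc
    · simp [θ, hc]
    · rw [div_mul_eq_mul_div, mul_assoc, RCLike.conj_mul,
        div_eq_iff (RCLike.ofReal_ne_zero.2 (norm_ne_zero_iff.2 hc))]
      ring
  set h := f₀ + ((l : 𝕜) * θ) • f
  have hh : ‖h‖ ≤ 1 + l * ε := by
    refine h.norm_le_of_forall_le (by positivity) fun z => ?_
    have hfz : ‖f z‖ ≤ ‖f‖ := f.norm_apply_le z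
    have hlθ : ‖(l : 𝕜) * θ‖ ≤ l := by
      rw [norm_mul, RCLike.norm_ofReal, abs_of_pos hl]
      exact mul_le_of_le_one_right hl.le hθ
    calc ‖h z‖ ≤ ‖f₀ z‖ + ‖(l : 𝕜) * θ * f z‖ := norm_add_le _ _
      _ ≤ ‖f₀ z‖ + l * ‖f z‖ := by
          rw [norm_mul]
          gcongr
      _ ≤ 1 + l * ε := by
          by_cases hz : ‖f z‖ ≤ ε
          · have := hf₀.norm_eq ▸ f₀.norm_apply_le z
            rw [hx, norm_one] at this
            nlinarith
          · nlinarith [hoff z hz]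
  have hGh : G h y = ((1 + l * ‖c‖ : ℝ) : 𝕜) * t := by
    simp only [h, map_add, map_smul, ZeroAtInftyContinuousMap.add_apply,
      ZeroAtInftyContinuousMap.smul_apply, smul_eq_mul]
    rw [mul_assoc, hθc]
    push_cast
    ring
  have : 1 + l * ‖c‖ ≤ 1 + l * ε := by
    calc 1 + l * ‖c‖ = ‖G h y‖ := by
          rw [hGh, norm_mul, hy, mul_one, RCLike.norm_ofReal, abs_of_pos (by positivity)]
      _ ≤ ‖G h‖ := (G h).norm_apply_le y
      _ = ‖h‖ := G.norm_map h
      _ ≤ 1 + l * ε := hh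
  nlinarith

theorem LinearIsometry.apply_eq_mul_of_isStrictPeakAt (hf₀ : IsStrictPeakAt f₀ x)
    (hx : f₀ x = 1) (hy : ‖G f₀ y‖ = 1) (f : C₀(X, 𝕜)) : G f y = G f₀ y * f x := by
  have hvanish : ∀ f : C₀(X, 𝕜), f x = 0 → G f y = 0 := fun f hf =>
    norm_le_zero_iff.1 <| le_of_forall_pos_le_add fun ε hε => by
      rw [zero_add]
      exact G.norm_apply_le_of_isStrictPeakAt hf₀ hx hy
        ((map_continuous f).norm.continuousAt.eventually (ge_mem_nhds (by simpa [hf])))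
  have := hvanish (f - f x • f₀) (by simp [hx])
  simpa [sub_eq_zero, mul_comm] using this

theorem LinearIsometry.isStrictPeakAt_apply [LocallyCompactSpace X] [T2Space X]
    [FirstCountableTopology X] (hG : Function.Surjective G) (hf₀ : IsStrictPeakAt f₀ x)
    (hx : f₀ x = 1) (hy : ‖G f₀ y‖ = 1) : IsStrictPeakAt (G f₀) y := by
  intro w hwy
  rw [hy]
  have hle : ‖G f₀ w‖ ≤ 1 := by
    simpa [G.norm_map, hf₀.norm_eq, hx] using (G f₀).norm_apply_le w
  refine hle.lt_of_ne fun hw => ?_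
  obtain ⟨p, hp1, hp⟩ := exists_isStrictPeakAt (𝕜 := 𝕜) y
  obtain ⟨m, rfl⟩ := hG p
  have hmx : ‖m x‖ = 1 := by
    simpa [hp1, hy] using (congrArg norm (G.apply_eq_mul_of_isStrictPeakAt hf₀ hx hy m)).symm
  have hmw : ‖G m w‖ = 1 := by
    rw [G.apply_eq_mul_of_isStrictPeakAt hf₀ hx hw m, norm_mul, hw, hmx, one_mul]
  simpa [hmw, hp1] using hp w hwy

end Peaks

/-- Every local surjective isometry `F` of `C₀(X)`, for a first
countable locally compact Hausdorff space `X`, satisfies `F(f)(g(x)) = t(x)·f(x)` for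
some continuous unimodular `t : X → ℂ` and some homeomorphism `g` of `X` onto its range
(i.e. a topological embedding). -/
theorem local_surjective_isometry_form
    {X : Type*} [TopologicalSpace X] [LocallyCompactSpace X] [T2Space X]
    [FirstCountableTopology X]
    (F : C₀(X, ℂ) →L[ℂ] C₀(X, ℂ))
    (hF : ∀ f : C₀(X, ℂ), ∃ S : C₀(X, ℂ) → C₀(X, ℂ),
      IsSurjectiveLinearIsometry S ∧ F f = S f) :
    ∃ (t : X → ℂ) (g : X → X), Continuous t ∧ (∀ x : X, ‖t x‖ = 1) ∧
      Topology.IsEmbedding g ∧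
      ∀ (f : C₀(X, ℂ)) (x : X), F f (g x) = t x * f x := by
  choose S hS hFS using hF
  let G : C₀(X, ℂ) →ₗᵢ[ℂ] C₀(X, ℂ) :=
    { F.toLinearMap with norm_map' := fun f => by simp [hFS f, (hS f).2.2] }
  choose p hp1 hp using exists_isStrictPeakAt (𝕜 := ℂ) (X := X)
  have hGp : ∀ x, ‖G (p x)‖ = 1 := fun x => by simp [G.norm_map, (hp x).norm_eq, hp1]
  choose g hg using fun x =>
    (G (p x)).exists_norm_apply_eq_norm (by simp [← norm_ne_zero_iff, hGp])
  set t : X → ℂ := fun x => F (p x) (g x)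
  have ht : ∀ x, ‖t x‖ = 1 := fun x => (hg x).trans (hGp x)
  have hrep : ∀ f x, F f (g x) = t x * f x := fun f x =>
    G.apply_eq_mul_of_isStrictPeakAt (hp x) (hp1 x) (ht x) f
  have hpeak : ∀ x, IsStrictPeakAt (F (p x)) (g x) := fun x => by
    rw [hFS]
    exact (hS (p x)).toLinearIsometry.isStrictPeakAt_apply (hS (p x)).2.1 (hp x) (hp1 x)
      (by simpa [← hFS] using ht x)
  have hind : IsInducing g := isInducing_of_isStrictPeakAt hp hpeak (by simp [hp1])
    fun x z => by simp [hrep, ht]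
  refine ⟨t, g, continuous_iff_continuousAt.2 fun x => ?_, ht, ⟨hind, hind.injective⟩, hrep⟩
  exact continuousAt_of_eq_mul ((map_continuous (F (p x))).comp hind.continuous).continuousAt
    (map_continuous (p x)).continuousAt (by simp [hp1]) fun z => hrep (p x) z
end

section
/- There exist a bounded linear map Φ : C₀(ℝ, B(H)) → C₀(ℝ, B(H)) and a sequence (Φ_n) of isometric automorphisms of C₀(ℝ, B(H)) such that Φ_n(f) converges in norm to Φ(f) for every f ∈ C₀(ℝ, B(H)), but Φ is not surjective (hence Φ is neither an automorphism nor a surjective isometry). In particular, the automorphism group and the isometry group of C₀(ℝ, B(H)) are not topologically reflexive. Concretely, if (φ_n) is a sequence of homeomorphisms of ℝ converging uniformly to a non-injective continuous function φ such that f∘φ ∈ C₀(ℝ) for f ∈ C₀(ℝ), then Φ_n(f) = f∘φ_n and Φ(f) = f∘φ provide such maps. -/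
/-!
Take `φᵣ(t) = t - r · projIcc 0 1 t`. For `r < 1` it is a strictly increasing continuous
surjection of `ℝ`, hence a homeomorphism, and composition with a homeomorphism is an isometric
automorphism of `C₀(ℝ, E)`. As `r → 1`, `φᵣ → φ₁` uniformly, and since every `f ∈ C₀` is
uniformly continuous, `f ∘ φᵣ → f ∘ φ₁` in norm. The limit `φ₁` stays at bounded distance from
the identity, so it is proper, but it collapses `[0, 1]` to a point; so every `f ∘ φ₁` takes the
same value at `0` and `1`, while `C₀(ℝ, B(H))` contains functions that do not.
-/

open scoped ZeroAtInfty

open Filter Topology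

theorem tendsto_cocompact_of_dist_le {α : Type*} [PseudoMetricSpace α] [ProperSpace α]
    {f : α → α} {C : ℝ} (h : ∀ y, dist (f y) y ≤ C) :
    Tendsto f (cocompact α) (cocompact α) := by
  rcases isEmpty_or_nonempty α with _ | ⟨⟨x⟩⟩
  · exact tendsto_of_isEmpty
  refine tendsto_cocompact_of_tendsto_dist_comp_atTop x <|
    tendsto_atTop_mono (fun y => ?_) <|
      tendsto_atTop_add_const_right _ (-C) (tendsto_dist_right_cocompact_atTop x)
  linarith [dist_triangle_left y x (f y), h y]

namespace ZeroAtInftyContinuousMap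

variable {α β E : Type*} [TopologicalSpace α]

section Norm

variable [TopologicalSpace β] [NormedAddCommGroup E]

theorem norm_comp_le (f : C₀(β, E)) (g : CocompactMap α β) : ‖f.comp g‖ ≤ ‖f‖ := by
  rw [← norm_toBCF_eq_norm, ← norm_toBCF_eq_norm,
    BoundedContinuousFunction.norm_le (norm_nonneg _)]
  exact fun x => f.toBCF.norm_coe_le_norm (g x)

theorem norm_comp_of_surjective (f : C₀(β, E)) {g : CocompactMap α β}
    (hg : Function.Surjective g) : ‖f.comp g‖ = ‖f‖ := by
  refine (norm_comp_le f g).antisymm ?_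
  rw [← norm_toBCF_eq_norm, ← norm_toBCF_eq_norm,
    BoundedContinuousFunction.norm_le (norm_nonneg _)]
  intro y
  obtain ⟨x, rfl⟩ := hg y
  exact (f.comp g).toBCF.norm_coe_le_norm x

noncomputable def compCLM (𝕜 : Type*) [NormedField 𝕜] [NormedSpace 𝕜 E]
    (g : CocompactMap α β) : C₀(β, E) →L[𝕜] C₀(α, E) :=
  (compLinearMap g).mkContinuous 1 fun f => by rw [one_mul]; exact norm_comp_le f g

end Norm

theorem isAlgebraAutomorphism_comp_homeomorph [NonUnitalNonAssocSemiring E] [TopologicalSpace E]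
    [IsTopologicalSemiring E] [Module ℂ E] [ContinuousConstSMul ℂ E] (h : α ≃ₜ α) :
    IsAlgebraAutomorphism fun f : C₀(α, E) => f.comp h.toCocompactMap := by
  let φ := compNonUnitalAlgHom (R := ℂ) (δ := E) h.toCocompactMap
  refine ⟨⟨φ.map_add, φ.map_smul⟩, φ.map_mul, ?_⟩
  refine Function.bijective_iff_has_inverse.2 ⟨fun f => f.comp h.symm.toCocompactMap, ?_, ?_⟩
  · intro f; ext x; simp
  · intro f; ext x; simp

theorem tendsto_comp_of_tendstoUniformly [UniformSpace β] [NormedAddCommGroup E] {ι : Type*}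
    {l : Filter ι} {g : ι → CocompactMap α β} {g₀ : CocompactMap α β}
    (hg : TendstoUniformly (fun i => ⇑(g i)) g₀ l) (f : C₀(β, E)) :
    Tendsto (fun i => f.comp (g i)) l (𝓝 (f.comp g₀)) :=
  tendsto_iff_tendstoUniformly.2 <| (uniformContinuous f).comp_tendstoUniformly hg

theorem exists_apply_ne [T2Space α] [LocallyCompactSpace α] [NormedAddCommGroup E]
    [NormedSpace ℝ E] [Nontrivial E] {a b : α} (hab : a ≠ b) : ∃ F : C₀(α, E), F a ≠ F b := by
  obtain ⟨ρ, hρb, hρa, hρ, -⟩ := exists_continuous_one_zero_of_isCompact isCompact_singleton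
    isClosed_singleton (Set.disjoint_singleton.2 hab.symm)
  obtain ⟨e, he⟩ := exists_ne (0 : E)
  refine ⟨⟨⟨fun x => ρ x • e, by fun_prop⟩,
    (hρ.smul_right (f' := fun _ => e)).is_zero_at_infty⟩, ?_⟩
  simp [hρa rfl, hρb rfl, he.symm]

theorem not_surjective_comp_of_not_injective [T2Space α] [LocallyCompactSpace α]
    [TopologicalSpace β] [NormedAddCommGroup E] [NormedSpace ℝ E] [Nontrivial E]
    {g : CocompactMap α β} (hg : ¬ Function.Injective g) :
    ¬ Function.Surjective fun f : C₀(β, E) => f.comp g := by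
  intro hsurj
  obtain ⟨a, b, hgab, hab⟩ : ∃ a b, g a = g b ∧ a ≠ b := by
    simpa [Function.Injective] using hg
  obtain ⟨F, hF⟩ := exists_apply_ne (E := E) hab
  obtain ⟨f, rfl⟩ := hsurj F
  exact hF (congrArg f hgab)

end ZeroAtInftyContinuousMap

theorem Continuous.surjective_of_dist_le {f : ℝ → ℝ} (hf : Continuous f) {C : ℝ}
    (h : ∀ t, dist (f t) t ≤ C) : Function.Surjective f := by
  have h' t := abs_le.1 (h t)
  exact hf.surjective
    (tendsto_atTop_mono (fun t => by simp only [id]; linarith [h' t])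
      (tendsto_atTop_add_const_right _ (-C) tendsto_id))
    (tendsto_atBot_mono (fun t => by simp only [id]; linarith [h' t])
      (tendsto_atBot_add_const_right _ C tendsto_id))

noncomputable def squeezeUnitInterval (r t : ℝ) : ℝ := t - r * Set.projIcc 0 1 zero_le_one t

theorem continuous_squeezeUnitInterval (r : ℝ) : Continuous (squeezeUnitInterval r) :=
  continuous_id.sub <| continuous_const.mul <| continuous_subtype_val.comp continuous_projIcc

theorem dist_squeezeUnitInterval_le (r s t : ℝ) :
    dist (squeezeUnitInterval r t) (squeezeUnitInterval s t) ≤ |r - s| := by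
  have hc := (Set.projIcc (0 : ℝ) 1 zero_le_one t).2
  rw [Real.dist_eq, squeezeUnitInterval, squeezeUnitInterval,
    show ∀ c : ℝ, t - r * c - (t - s * c) = -((r - s) * c) from fun c => by ring, abs_neg,
    abs_mul, abs_of_nonneg hc.1]
  exact mul_le_of_le_one_right (abs_nonneg _) hc.2

theorem dist_squeezeUnitInterval_self_le (r t : ℝ) : dist (squeezeUnitInterval r t) t ≤ |r| := by
  simpa [squeezeUnitInterval] using dist_squeezeUnitInterval_le r 0 t

theorem strictMono_squeezeUnitInterval {r : ℝ} (hr : r < 1) :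
    StrictMono (squeezeUnitInterval r) := by
  intro s t hst
  set d : ℝ := Set.projIcc 0 1 zero_le_one t - Set.projIcc 0 1 zero_le_one s
  have hd₀ : 0 ≤ d := sub_nonneg.2 (Set.monotone_projIcc zero_le_one hst.le)
  have hd₁ : d ≤ t - s := (le_abs_self d).trans <|
    (Set.abs_projIcc_sub_projIcc zero_le_one).trans (abs_of_pos (sub_pos.2 hst)).le
  have : squeezeUnitInterval r t - squeezeUnitInterval r s = (t - s) - r * d := by
    simp only [squeezeUnitInterval, d]; ring
  rcases le_total r 0 with hr₀ | hr₀ <;> nlinarith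

theorem tendstoUniformly_squeezeUnitInterval {ι : Type*} {l : Filter ι} {r : ι → ℝ} {s : ℝ}
    (hr : Tendsto r l (𝓝 s)) :
    TendstoUniformly (fun i => squeezeUnitInterval (r i)) (squeezeUnitInterval s) l := by
  rw [Metric.tendstoUniformly_iff]
  intro ε hε
  filter_upwards [Metric.tendsto_nhds.1 hr ε hε] with i hi t
  exact (dist_squeezeUnitInterval_le s (r i) t).trans_lt (by rwa [← Real.dist_eq, dist_comm])

noncomputable def squeezeUnitIntervalHomeomorph {r : ℝ} (hr : r < 1) : ℝ ≃ₜ ℝ :=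
  (StrictMono.orderIsoOfSurjective _ (strictMono_squeezeUnitInterval hr)
    ((continuous_squeezeUnitInterval r).surjective_of_dist_le
      (dist_squeezeUnitInterval_self_le r))).toHomeomorph

noncomputable def collapseUnitInterval : CocompactMap ℝ ℝ :=
  ⟨⟨squeezeUnitInterval 1, continuous_squeezeUnitInterval 1⟩,
    tendsto_cocompact_of_dist_le (dist_squeezeUnitInterval_self_le 1)⟩

theorem not_injective_collapseUnitInterval : ¬ Function.Injective collapseUnitInterval :=
  fun h => zero_ne_one <| h <| by simp [collapseUnitInterval, squeezeUnitInterval]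

open ZeroAtInftyContinuousMap in
theorem exists_pointwise_limit_of_isometric_automorphisms_not_surjective_general
    {H : Type*} [NormedAddCommGroup H] [InnerProductSpace ℂ H]
    (hH : ¬ FiniteDimensional ℂ H) :
    ∃ (Φ : C₀(ℝ, H →L[ℂ] H) →L[ℂ] C₀(ℝ, H →L[ℂ] H))
      (Φn : ℕ → (C₀(ℝ, H →L[ℂ] H) → C₀(ℝ, H →L[ℂ] H))),
      (∀ n : ℕ, IsAlgebraAutomorphism (Φn n)) ∧
      (∀ (n : ℕ) (f : C₀(ℝ, H →L[ℂ] H)), ‖Φn n f‖ = ‖f‖) ∧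
      (∀ f : C₀(ℝ, H →L[ℂ] H),
        Filter.Tendsto (fun n : ℕ => Φn n f) Filter.atTop (nhds (Φ f))) ∧
      ¬ Function.Surjective (⇑Φ) := by
  have : Nontrivial H := not_subsingleton_iff_nontrivial.1 fun _ => hH inferInstance
  let r : ℕ → ℝ := fun n => 1 - 1 / (n + 1)
  have hr (n : ℕ) : r n < 1 := sub_lt_self _ Nat.one_div_pos_of_nat
  have hr_lim : Tendsto r atTop (𝓝 1) := by
    simpa [r] using
      (tendsto_const_nhds (x := (1 : ℝ))).sub tendsto_one_div_add_atTop_nhds_zero_nat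
  let φ (n : ℕ) := squeezeUnitIntervalHomeomorph (hr n)
  exact ⟨compCLM ℂ collapseUnitInterval, fun n f => f.comp (φ n).toCocompactMap,
    fun n => isAlgebraAutomorphism_comp_homeomorph (φ n),
    fun n f => norm_comp_of_surjective f (φ n).surjective,
    tendsto_comp_of_tendstoUniformly (tendstoUniformly_squeezeUnitInterval hr_lim),
    not_surjective_comp_of_not_injective not_injective_collapseUnitInterval⟩

/-- There exist a bounded linear map `Φ` on `C₀(ℝ, B(H))` and a
sequence `(Φₙ)` of isometric automorphisms of `C₀(ℝ, B(H))` such that `Φₙ(f) → Φ(f)`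
in norm for every `f`, but `Φ` is not surjective. In particular, the automorphism and
isometry groups of `C₀(ℝ, B(H))` are not topologically reflexive. -/
theorem exists_pointwise_limit_of_isometric_automorphisms_not_surjective
    {H : Type*} [NormedAddCommGroup H] [InnerProductSpace ℂ H] [CompleteSpace H]
    [TopologicalSpace.SeparableSpace H] (hH : ¬ FiniteDimensional ℂ H) :
    ∃ (Φ : C₀(ℝ, H →L[ℂ] H) →L[ℂ] C₀(ℝ, H →L[ℂ] H))
      (Φn : ℕ → (C₀(ℝ, H →L[ℂ] H) → C₀(ℝ, H →L[ℂ] H))),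
      (∀ n : ℕ, IsAlgebraAutomorphism (Φn n)) ∧
      (∀ (n : ℕ) (f : C₀(ℝ, H →L[ℂ] H)), ‖Φn n f‖ = ‖f‖) ∧
      (∀ f : C₀(ℝ, H →L[ℂ] H),
        Filter.Tendsto (fun n : ℕ => Φn n f) Filter.atTop (nhds (Φ f))) ∧
      ¬ Function.Surjective (⇑Φ) :=
  exists_pointwise_limit_of_isometric_automorphisms_not_surjective_general hH
end
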